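/- Let δ be a positive integer divisible by 6 and let Q ∈ ℤ[T]. For an integer t with Q(t) ≠ 0, define h(t) = ∏ (−1/p), the product running over all primes p not dividing δ such that ν_p(Q(t)) ≡ 2 (mod 4). Let t₁, t₂ be integers, c a nonzero integer, l and η squarefree integers, and q₀ a prime with q₀ ∤ δ and gcd(q₀, cη) = 1, such that Q(t₁) = c²·l with gcd(c,l) = 1, and Q(t₂) = (c·q₀)²·η with gcd(c,η) = 1. If the Legendre symbol (−1/q₀) equals −1, then h(t₁) = −h(t₂). -/

import Mathlib

/-!
If `m = c² l` with `l` squarefree and coprime to `c`, then `ν_p(m) ≡ 2 (mod 4)` exactly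
when `ν_p(c)` is odd, so the primes contributing to `h` depend only on `c`. Passing from `c`
to `c q₀` with `q₀ ∤ c` adds exactly the prime `q₀` to that set, which multiplies `h` by
`(-1/q₀) = -1`.
-/

/-- The corrective term `h(t) = ∏ (-1/p)`, the product running over the primes `p ∤ δ`
with `ν_p(Q(t)) ≡ 2 (mod 4)` (types `III`, `III*`). -/
def corrTerm (δ : ℕ) (Q : Polynomial ℤ) (t : ℤ) : ℤ :=
  ∏ p ∈ ((Q.eval t).natAbs.primeFactors.filter
    (fun p => ¬ p ∣ δ ∧ padicValInt p (Q.eval t) % 4 = 2)),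
    if hp : p.Prime then @legendreSym p ⟨hp⟩ (-1) else 1

def corrPrimes (δ : ℕ) (m : ℤ) : Finset ℕ :=
  m.natAbs.primeFactors.filter (fun p => ¬ p ∣ δ ∧ padicValInt p m % 4 = 2)

lemma corrTerm_eq_prod_corrPrimes (δ : ℕ) (Q : Polynomial ℤ) (t : ℤ) :
    corrTerm δ Q t =
      ∏ p ∈ corrPrimes δ (Q.eval t), if hp : p.Prime then @legendreSym p ⟨hp⟩ (-1) else 1 :=
  rfl

lemma mem_corrPrimes {δ : ℕ} {m : ℤ} (hm : m ≠ 0) {p : ℕ} :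
    p ∈ corrPrimes δ m ↔ p.Prime ∧ ¬ p ∣ δ ∧ padicValInt p m % 4 = 2 := by
  rw [corrPrimes, Finset.mem_filter, Nat.mem_primeFactors]
  refine ⟨fun ⟨⟨hp, _, _⟩, hpδ, hv⟩ => ⟨hp, hpδ, hv⟩, fun ⟨hp, hpδ, hv⟩ => ?_⟩
  refine ⟨⟨hp, ?_, Int.natAbs_ne_zero.mpr hm⟩, hpδ, hv⟩
  by_contra hpm
  rw [padicValInt.eq_zero_of_not_dvd (by rwa [Int.natCast_dvd])] at hv
  omega

lemma Squarefree.padicValInt_le_one {l : ℤ} (hl : Squarefree l) (p : ℕ)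
    [Fact p.Prime] : padicValInt p l ≤ 1 := by
  rw [padicValInt, ← Nat.factorization_def _ Fact.out]
  exact (Int.squarefree_natAbs.mpr hl).natFactorization_le_one p

lemma IsCoprime.padicValInt_eq_zero_or {p : ℕ} [Fact p.Prime] {a b : ℤ}
    (h : IsCoprime a b) : padicValInt p a = 0 ∨ padicValInt p b = 0 := by
  by_contra! hab
  have hpa : (p : ℤ) ∣ a := by
    simpa using (padicValInt_dvd_iff 1 a).2 (Or.inr (Nat.one_le_iff_ne_zero.2 hab.1))
  have hpb : (p : ℤ) ∣ b := by
    simpa using (padicValInt_dvd_iff 1 b).2 (Or.inr (Nat.one_le_iff_ne_zero.2 hab.2))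
  exact (Nat.prime_iff_prime_int.mp Fact.out).not_isUnit (h.isUnit_of_dvd' hpa hpb)

lemma padicValInt_sq_mul_mod_four_eq_two_iff {p : ℕ} [Fact p.Prime] {c l : ℤ} (hc : c ≠ 0)
    (hl : Squarefree l) (hcl : IsCoprime c l) :
    padicValInt p (c ^ 2 * l) % 4 = 2 ↔ padicValInt p c % 2 = 1 := by
  rw [padicValInt.mul (pow_ne_zero 2 hc) hl.ne_zero, sq, padicValInt.mul hc hc]
  have := hl.padicValInt_le_one p
  rcases hcl.padicValInt_eq_zero_or (p := p) with h | h <;> omega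

lemma mem_corrPrimes_sq_mul {δ : ℕ} {c l : ℤ} (hc : c ≠ 0) (hl : Squarefree l)
    (hcl : IsCoprime c l) {p : ℕ} :
    p ∈ corrPrimes δ (c ^ 2 * l) ↔ p.Prime ∧ ¬ p ∣ δ ∧ padicValInt p c % 2 = 1 := by
  rw [mem_corrPrimes (mul_ne_zero (pow_ne_zero 2 hc) hl.ne_zero)]
  refine and_congr_right fun hp => and_congr_right fun _ => ?_
  have := Fact.mk hp
  exact padicValInt_sq_mul_mod_four_eq_two_iff hc hl hcl

lemma padicValInt_mul_prime {p q : ℕ} [Fact p.Prime] (hq : q.Prime) {c : ℤ} (hc : c ≠ 0) :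
    padicValInt p (c * q) = padicValInt p c + if p = q then 1 else 0 := by
  have := Fact.mk hq
  rw [padicValInt.mul hc (Int.natCast_ne_zero.mpr hq.ne_zero)]
  split_ifs with hpq
  · rw [hpq, padicValInt_self]
  · rw [padicValInt.of_nat, padicValNat_primes hpq]

lemma corrPrimes_sq_mul_prime {δ : ℕ} {c l η : ℤ} {q : ℕ} (hq : q.Prime) (hqδ : ¬ q ∣ δ)
    (hqc : ¬ (q : ℤ) ∣ c) (hc : c ≠ 0) (hl : Squarefree l) (hcl : IsCoprime c l)
    (hη : Squarefree η) (hcqη : IsCoprime (c * q) η) :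
    corrPrimes δ ((c * q) ^ 2 * η) = insert q (corrPrimes δ (c ^ 2 * l)) := by
  have hcq : c * q ≠ 0 := mul_ne_zero hc (Int.natCast_ne_zero.mpr hq.ne_zero)
  have hvq : padicValInt q c = 0 := padicValInt.eq_zero_of_not_dvd hqc
  ext p
  rw [Finset.mem_insert, mem_corrPrimes_sq_mul hc hl hcl, mem_corrPrimes_sq_mul hcq hη hcqη]
  by_cases hpq : p = q
  · subst hpq
    have := Fact.mk hq
    simp [hq, hqδ, padicValInt_mul_prime hq hc, hvq]
  · simp only [hpq, false_or]
    refine and_congr_right fun hp => and_congr_right fun _ => ?_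
    have := Fact.mk hp
    rw [padicValInt_mul_prime hq hc, if_neg hpq, add_zero]

theorem stmt_15_general (δ : ℕ) (Q : Polynomial ℤ)
    (t₁ t₂ c l η : ℤ) (hc : c ≠ 0) (hl : Squarefree l) (hη : Squarefree η)
    (q₀ : ℕ) (hq : q₀.Prime) (hqδ : ¬ q₀ ∣ δ)
    (hqcη : Int.gcd (q₀ : ℤ) (c * η) = 1)
    (h1 : Q.eval t₁ = c ^ 2 * l) (hcl : Int.gcd c l = 1)
    (h2 : Q.eval t₂ = (c * (q₀ : ℤ)) ^ 2 * η) (hcη : Int.gcd c η = 1)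
    (hleg : @legendreSym q₀ ⟨hq⟩ (-1) = -1) :
    corrTerm δ Q t₁ = - corrTerm δ Q t₂ := by
  have hqcη' := Int.isCoprime_iff_gcd_eq_one.mpr hqcη
  have hcl' := Int.isCoprime_iff_gcd_eq_one.mpr hcl
  have hqc : ¬ (q₀ : ℤ) ∣ c := fun hd =>
    (Nat.prime_iff_prime_int.mp hq).not_isUnit (hqcη'.isUnit_of_dvd' dvd_rfl (hd.mul_right η))
  have hcqη : IsCoprime (c * q₀) η :=
    (Int.isCoprime_iff_gcd_eq_one.mpr hcη).mul_left hqcη'.of_mul_right_right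
  have hq_not_mem : q₀ ∉ corrPrimes δ (c ^ 2 * l) := by
    rw [mem_corrPrimes_sq_mul hc hl hcl', padicValInt.eq_zero_of_not_dvd hqc]
    simp
  rw [corrTerm_eq_prod_corrPrimes, corrTerm_eq_prod_corrPrimes, h1, h2,
    corrPrimes_sq_mul_prime hq hqδ hqc hc hl hcl' hη hcqη, Finset.prod_insert hq_not_mem,
    dif_pos hq, hleg, neg_one_mul, neg_neg]

/-- Sign change of the corrective term at a prime `q₀` with `(-1/q₀) = -1`. -/
theorem stmt_15 (δ : ℕ) (hδ : 0 < δ) (h6 : 6 ∣ δ) (Q : Polynomial ℤ)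
    (t₁ t₂ c l η : ℤ) (hc : c ≠ 0) (hl : Squarefree l) (hη : Squarefree η)
    (q₀ : ℕ) (hq : q₀.Prime) (hqδ : ¬ q₀ ∣ δ)
    (hqcη : Int.gcd (q₀ : ℤ) (c * η) = 1)
    (h1 : Q.eval t₁ = c ^ 2 * l) (hcl : Int.gcd c l = 1)
    (h2 : Q.eval t₂ = (c * (q₀ : ℤ)) ^ 2 * η) (hcη : Int.gcd c η = 1)
    (hleg : @legendreSym q₀ ⟨hq⟩ (-1) = -1) :
    corrTerm δ Q t₁ = - corrTerm δ Q t₂ :=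
  stmt_15_general δ Q t₁ t₂ c l η hc hl hη q₀ hq hqδ hqcη h1 hcl h2 hcη hleg
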